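/- arXiv:2510.10929 — 2 statements merged into one kernel-verified Lean document; each statement's English description precedes it below -/
import Mathlib

section
/- Under any weighted proportional sharing rule WPS^w with strictly positive weights, let T be a POT policy with T_j ≥ T^c_j for every j ∈ N. Then every retailer i with T_i = T^c_i cannot reduce its cost by decreasing its replenishment interval: f_i(T^c_i;T_{-i}) ≤ f_i(2^{-z}·T^c_i;T_{-i}) for every z ∈ ℤ_{>0}. -/
open Finset

noncomputable section

/-- `t` is a power-of-two (POT) value with base period `B`. -/
def IsPOT (B t : ℝ) : Prop := ∃ z : ℤ, t = (2 : ℝ) ^ z * B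

/-- Membership of an interval `t` in retailer `i`'s strategy set `Γ_i`,
given major setup cost `K0`, minor setup cost `Ki` and holding parameter `Hi`. -/
def InStrategy (B K0 Ki Hi t : ℝ) : Prop :=
  IsPOT B t ∧ Real.sqrt (Ki / (2 * Hi)) ≤ t ∧ t ≤ Real.sqrt (2 * (K0 + Ki) / Hi)

/-- `N[τ; T_{-i}] = {i} ∪ {j : T j ≤ τ}`. -/
def grp {n : ℕ} (T : Fin n → ℝ) (i : Fin n) (τ : ℝ) : Finset (Fin n) :=
  insert i (Finset.univ.filter fun j => T j ≤ τ)

/-- The set of levels `L(T) = {T j : j ∈ N}`. -/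
def levels {n : ℕ} (T : Fin n → ℝ) : Finset ℝ := Finset.image T Finset.univ

/-- `1/τ⁺`: the inverse of the smallest level larger than `τ`, with the
convention that it is `0` when no larger level exists. -/
def invSucc (L : Finset ℝ) (τ : ℝ) : ℝ :=
  if h : (L.filter fun u => τ < u).Nonempty then 1 / (L.filter fun u => τ < u).min' h
  else 0

/-- Major-setup share `x_i(T)` of retailer `i` under the weighted proportional
sharing rule with weights `w` (intended for strictly positive weights). -/
def share {n : ℕ} (K0 : ℝ) (w T : Fin n → ℝ) (i : Fin n) : ℝ :=
  ∑ τ ∈ (levels T).filter (fun τ => T i ≤ τ),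
    (1 / τ - invSucc (levels T) τ) *
      (w i / ∑ j ∈ Finset.univ.filter (fun j => T j ≤ τ), w j) * K0

/-- Major-setup share for nonnegative weights: if the order group has total
weight zero, the major setup cost is split equally among its members. -/
def shareZ {n : ℕ} (K0 : ℝ) (w T : Fin n → ℝ) (i : Fin n) : ℝ :=
  ∑ τ ∈ (levels T).filter (fun τ => T i ≤ τ),
    (1 / τ - invSucc (levels T) τ) *
      (if 0 < ∑ j ∈ Finset.univ.filter (fun j => T j ≤ τ), w j
        then w i / ∑ j ∈ Finset.univ.filter (fun j => T j ≤ τ), w j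
        else 1 / ((Finset.univ.filter fun j => T j ≤ τ) : Finset (Fin n)).card) * K0

/-- Individual cost `f_i(T) = H_i T_i + K_i / T_i + x_i(T)` under `WPS^w`. -/
def indCost {n : ℕ} (K0 : ℝ) (K H w : Fin n → ℝ) (T : Fin n → ℝ) (i : Fin n) : ℝ :=
  H i * T i + K i / T i + share K0 w T i

/-- Individual cost under the zero-weight-tolerant sharing rule. -/
def indCostZ {n : ℕ} (K0 : ℝ) (K H w : Fin n → ℝ) (T : Fin n → ℝ) (i : Fin n) : ℝ :=
  H i * T i + K i / T i + shareZ K0 w T i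

/-- System cost `C(T)`. -/
def sysCost {n : ℕ} (K0 : ℝ) (K H : Fin n → ℝ) (T : Fin n → ℝ) : ℝ :=
  (∑ i, (H i * T i + K i / T i)) + K0 / (⨅ i, T i)

/-- Nash equilibrium of the game induced by `WPS^w`. -/
def IsNE {n : ℕ} (B K0 : ℝ) (K H w : Fin n → ℝ) (T : Fin n → ℝ) : Prop :=
  (∀ i, InStrategy B K0 (K i) (H i) (T i)) ∧
  ∀ i t, InStrategy B K0 (K i) (H i) t →
    indCost K0 K H w T i ≤ indCost K0 K H w (Function.update T i t) i

/-- Nash equilibrium for the zero-weight-tolerant sharing rule. -/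
def IsNEZ {n : ℕ} (B K0 : ℝ) (K H w : Fin n → ℝ) (T : Fin n → ℝ) : Prop :=
  (∀ i, InStrategy B K0 (K i) (H i) (T i)) ∧
  ∀ i t, InStrategy B K0 (K i) (H i) t →
    indCostZ K0 K H w T i ≤ indCostZ K0 K H w (Function.update T i t) i

/-- `s = min_{∅ ⊂ S ⊆ N} (K0 + Σ_{i∈S} K_i)/(Σ_{i∈S} H_i)`. -/
def sval (n : ℕ) (K0 : ℝ) (K H : Fin n → ℝ) : ℝ :=
  sInf ((fun S : Finset (Fin n) => (K0 + ∑ i ∈ S, K i) / ∑ i ∈ S, H i) '' {S | S.Nonempty})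

/-- `[b]_POT`: the POT value `a` with `b/√2 < a ≤ √2·b`. -/
def potRound (B b : ℝ) : ℝ := (2 : ℝ) ^ (round (Real.logb 2 (b / B))) * B

/-- The optimal centralized POT policy `T^c`. -/
def Tc (n : ℕ) (B K0 : ℝ) (K H : Fin n → ℝ) (i : Fin n) : ℝ :=
  if K i ≤ sval n K0 K H * H i then potRound B (Real.sqrt (sval n K0 K H))
  else potRound B (Real.sqrt (K i / H i))

end

/-!
Write `t = T^c_i` and `t' = 2^{-z} t ≤ t / 2`. The EOQ cost `H_i τ + c / τ` is minimised at
`√(c / H_i)`, and `t ≤ √2 · √(c / H_i)` implies that it does not decrease from `t` to `t'`.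
If `i ∈ V`, take `c = K_i`; moreover, at least halving one's own interval never lowers the
major-setup share. If `i ∈ U`, take `c = K_0 + K_i` (recall `s ≤ (K_0 + K_i) / H_i`): now
every `T_j ≥ T^c_j ≥ t`, so at `t'` retailer `i` orders alone and its share grows by at least
`K_0 (1 / t' - 1 / t)`.
-/

section PowerOfTwo

variable {B : ℝ}

lemma potRound_pos (hB : 0 < B) (b : ℝ) : 0 < potRound B b := by
  unfold potRound; positivity

lemma potRound_le_sqrt_two_mul (hB : 0 < B) {b : ℝ} (hb : 0 < b) :
    potRound B b ≤ √2 * b := by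
  set ℓ := Real.logb 2 (b / B)
  have hpow : (2 : ℝ) ^ round ℓ ≤ √2 * (b / B) := calc
    (2 : ℝ) ^ round ℓ = 2 ^ ((round ℓ : ℤ) : ℝ) := (Real.rpow_intCast 2 _).symm
    _ ≤ 2 ^ (ℓ + 1 / 2) := Real.rpow_le_rpow_of_exponent_le one_le_two (round_le_add_half ℓ)
    _ = √2 * (b / B) := by
      rw [Real.rpow_add two_pos, Real.rpow_logb two_pos (by norm_num) (by positivity),
        Real.sqrt_eq_rpow, mul_comm]
  calc potRound B b ≤ √2 * (b / B) * B := mul_le_mul_of_nonneg_right hpow hB.le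
    _ = √2 * b := by field_simp

lemma sq_potRound_sqrt_le (hB : 0 < B) {x : ℝ} (hx : 0 < x) :
    potRound B √x ^ 2 ≤ 2 * x := calc
  potRound B √x ^ 2 ≤ (√2 * √x) ^ 2 :=
    pow_le_pow_left₀ (potRound_pos hB _).le
      (potRound_le_sqrt_two_mul hB (Real.sqrt_pos.mpr hx)) 2
  _ = 2 * x := by rw [mul_pow, Real.sq_sqrt zero_le_two, Real.sq_sqrt hx.le]

lemma potRound_mono (hB : 0 < B) {b₁ b₂ : ℝ} (hb₁ : 0 < b₁) (h : b₁ ≤ b₂) :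
    potRound B b₁ ≤ potRound B b₂ := by
  unfold potRound
  gcongr
  · exact one_le_two
  · rw [round_eq, round_eq]
    have hlog : Real.logb 2 (b₁ / B) ≤ Real.logb 2 (b₂ / B) :=
      Real.logb_le_logb_of_le one_lt_two (div_pos hb₁ hB) (by gcongr)
    exact Int.floor_le_floor (by linarith)

end PowerOfTwo

section Centralized

variable {n : ℕ} {K0 : ℝ} {K H : Fin n → ℝ}

lemma sval_le_div (i : Fin n) : sval n K0 K H ≤ (K0 + K i) / H i :=
  csInf_le (Set.toFinite _).bddBelow ⟨{i}, singleton_nonempty i, by simp⟩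

lemma sval_pos (hK0 : 0 < K0) (hK : ∀ i, 0 ≤ K i) (hH : ∀ i, 0 < H i) (i : Fin n) :
    0 < sval n K0 K H := by
  have hHsum : 0 < ∑ j, H j := sum_pos (fun j _ => hH j) ⟨i, mem_univ i⟩
  refine lt_of_lt_of_le (div_pos hK0 hHsum) (le_csInf ⟨_, {i}, singleton_nonempty i, rfl⟩ ?_)
  rintro _ ⟨S, hS, rfl⟩
  calc K0 / ∑ j, H j ≤ K0 / ∑ j ∈ S, H j :=
        div_le_div_of_nonneg_left hK0.le (sum_pos (fun j _ => hH j) hS)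
          (sum_le_univ_sum_of_nonneg fun j => (hH j).le)
    _ ≤ (K0 + ∑ j ∈ S, K j) / ∑ j ∈ S, H j :=
        div_le_div_of_nonneg_right (le_add_of_nonneg_right (sum_nonneg fun j _ => hK j))
          (sum_nonneg fun j _ => (hH j).le)

variable {B : ℝ}

lemma Tc_pos (hB : 0 < B) (i : Fin n) : 0 < Tc n B K0 K H i := by
  unfold Tc; split <;> exact potRound_pos hB _

lemma Tc_eq_of_le (i : Fin n) (hi : K i ≤ sval n K0 K H * H i) :
    Tc n B K0 K H i = potRound B √(sval n K0 K H) := if_pos hi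

lemma Tc_eq_of_lt (i : Fin n) (hi : sval n K0 K H * H i < K i) :
    Tc n B K0 K H i = potRound B √(K i / H i) := if_neg hi.not_ge

lemma Tc_le_Tc_of_le (hB : 0 < B) (hs : 0 < sval n K0 K H) (hH : ∀ i, 0 < H i)
    {i : Fin n} (hi : K i ≤ sval n K0 K H * H i) (j : Fin n) :
    Tc n B K0 K H i ≤ Tc n B K0 K H j := by
  rw [Tc_eq_of_le i hi]
  rcases le_or_gt (K j) (sval n K0 K H * H j) with hj | hj
  · rw [Tc_eq_of_le j hj]
  · rw [Tc_eq_of_lt j hj]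
    exact potRound_mono hB (Real.sqrt_pos.mpr hs)
      (Real.sqrt_le_sqrt ((le_div_iff₀ (hH j)).mpr hj.le))

lemma mul_sq_Tc_le_of_le (hB : 0 < B) (hs : 0 < sval n K0 K H) (hH : ∀ i, 0 < H i)
    {i : Fin n} (hi : K i ≤ sval n K0 K H * H i) :
    H i * Tc n B K0 K H i ^ 2 ≤ 2 * (K0 + K i) := by
  rw [Tc_eq_of_le i hi]
  have := (le_div_iff₀ (hH i)).mp (sval_le_div (K0 := K0) (K := K) i)
  nlinarith [sq_potRound_sqrt_le hB hs, hH i]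

lemma mul_sq_Tc_le_of_lt (hB : 0 < B) (hs : 0 ≤ sval n K0 K H) (hH : ∀ i, 0 < H i)
    {i : Fin n} (hi : sval n K0 K H * H i < K i) :
    H i * Tc n B K0 K H i ^ 2 ≤ 2 * K i := by
  have hKH : 0 < K i / H i := div_pos ((mul_nonneg hs (hH i).le).trans_lt hi) (hH i)
  rw [Tc_eq_of_lt i hi, ← le_div_iff₀' (hH i), mul_div_assoc]
  exact sq_potRound_sqrt_le hB hKH

end Centralized

section Levels

lemma invSucc_le_one_div {L : Finset ℝ} {τ b : ℝ} (hb : 0 < b)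
    (h : ∀ x ∈ L, τ < x → b ≤ x) : invSucc L τ ≤ 1 / b := by
  unfold invSucc
  split_ifs with hne
  · obtain ⟨hmem, hlt⟩ := mem_filter.mp (min'_mem _ hne)
    exact one_div_le_one_div_of_le hb (h _ hmem hlt)
  · positivity

lemma invSucc_nonneg (L : Finset ℝ) {τ : ℝ} (hτ : 0 ≤ τ) : 0 ≤ invSucc L τ := by
  unfold invSucc
  split_ifs with hne
  · have := (mem_filter.mp (min'_mem _ hne)).2
    exact one_div_nonneg.mpr (by linarith)
  · exact le_rfl

lemma invSucc_le_one_div_self (L : Finset ℝ) {τ : ℝ} (hτ : 0 < τ) :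
    invSucc L τ ≤ 1 / τ :=
  invSucc_le_one_div hτ fun _ _ h => h.le

lemma invSucc_congr {L L' : Finset ℝ} {τ τ' : ℝ}
    (h : L.filter (τ < ·) = L'.filter (τ' < ·)) : invSucc L τ = invSucc L' τ' := by
  unfold invSucc
  rw [h]

/-- The gaps `1/u - 1/u⁺` telescope, up to the last one, which may overshoot `1/b`. -/
lemma one_div_sub_one_div_le_sum_gaps {M : Finset ℝ} (hM : ∀ x ∈ M, 0 < x) {a b : ℝ}
    (ha : a ∈ M) (hab : a < b) :
    1 / a - 1 / b ≤ ∑ u ∈ M.filter (fun u => a ≤ u ∧ u < b), (1 / u - invSucc M u) := by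
  obtain ⟨N, hN⟩ : ∃ N, #(M.filter fun u => a ≤ u ∧ u < b) = N := ⟨_, rfl⟩
  induction N using Nat.strong_induction_on generalizing b with
  | _ N ih =>
  set P := M.filter fun u => a ≤ u ∧ u < b
  have hPne : P.Nonempty := ⟨a, mem_filter.mpr ⟨ha, le_rfl, hab⟩⟩
  set m := P.max' hPne
  have hmP : m ∈ P := P.max'_mem hPne
  obtain ⟨hmM, ham, hmb⟩ : m ∈ M ∧ a ≤ m ∧ m < b := by simpa [P] using hmP
  have hgap : invSucc M m ≤ 1 / b := by
    refine invSucc_le_one_div ((hM m hmM).trans hmb) fun x hx hmx => not_lt.mp fun hxb => ?_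
    exact (P.le_max' x (mem_filter.mpr ⟨hx, ham.trans hmx.le, hxb⟩)).not_gt hmx
  have hPm : P.erase m = M.filter fun u => a ≤ u ∧ u < m := by
    ext x
    simp only [P, mem_erase, mem_filter]
    constructor
    · rintro ⟨hxm, hxM, hax, hxb⟩
      exact ⟨hxM, hax, lt_of_le_of_ne (P.le_max' x (mem_filter.mpr ⟨hxM, hax, hxb⟩)) hxm⟩
    · rintro ⟨hxM, hax, hxm⟩
      exact ⟨hxm.ne, hxM, hax, hxm.trans hmb⟩
  have hlow : 1 / a - 1 / m ≤ ∑ u ∈ P.erase m, (1 / u - invSucc M u) := by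
    rcases ham.eq_or_lt with ham | ham
    · rw [ham, sub_self]
      exact sum_nonneg fun u hu =>
        sub_nonneg.mpr (invSucc_le_one_div_self M (hM u (mem_filter.mp (mem_of_mem_erase hu)).1))
    · rw [hPm]
      exact ih _ (hN ▸ hPm ▸ card_erase_lt_of_mem hmP) ham rfl
  rw [← P.sum_erase_add _ hmP]
  linarith

end Levels

section Sharing

noncomputable def orderWeight {n : ℕ} (w T : Fin n → ℝ) (τ : ℝ) : ℝ :=
  ∑ j ∈ univ.filter (fun j => T j ≤ τ), w j

noncomputable def shareTerm {n : ℕ} (K0 : ℝ) (w T : Fin n → ℝ) (i : Fin n) (τ : ℝ) :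
    ℝ :=
  (1 / τ - invSucc (levels T) τ) * (w i / orderWeight w T τ) * K0

noncomputable def otherLevels {n : ℕ} (T : Fin n → ℝ) (i : Fin n) : Finset ℝ :=
  (univ.erase i).image T

/-- Zero when another retailer shares `i`'s level: that summand is then counted with
`otherLevels`. -/
noncomputable def ownLevelTerm {n : ℕ} (K0 : ℝ) (w T : Fin n → ℝ) (i : Fin n) : ℝ :=
  if T i ∈ otherLevels T i then 0 else shareTerm K0 w T i (T i)

variable {n : ℕ} (K0 : ℝ) (w : Fin n → ℝ) {T : Fin n → ℝ} {i : Fin n} {t : ℝ}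

lemma share_eq_sum_shareTerm (T : Fin n → ℝ) (i : Fin n) :
    share K0 w T i = ∑ τ ∈ (levels T).filter (T i ≤ ·), shareTerm K0 w T i τ := rfl

lemma levels_eq_insert (T : Fin n → ℝ) (i : Fin n) :
    levels T = insert (T i) (otherLevels T i) := by
  rw [levels, otherLevels, ← image_insert, insert_erase (mem_univ i)]

lemma otherLevels_update (T : Fin n → ℝ) (i : Fin n) (t : ℝ) :
    otherLevels (Function.update T i t) i = otherLevels T i :=
  image_congr fun _ hj => Function.update_of_ne (ne_of_mem_erase hj) _ _

lemma levels_update (T : Fin n → ℝ) (i : Fin n) (t : ℝ) :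
    levels (Function.update T i t) = insert t (otherLevels T i) := by
  rw [levels_eq_insert _ i, Function.update_self, otherLevels_update]

lemma orderWeight_pos (hw : ∀ j, 0 < w j) {j : Fin n} {τ : ℝ} (hj : T j ≤ τ) :
    0 < orderWeight w T τ :=
  sum_pos (fun j _ => hw j) ⟨j, mem_filter.mpr ⟨mem_univ j, hj⟩⟩

lemma div_orderWeight_le_one (hw : ∀ j, 0 < w j) {τ : ℝ} (hi : T i ≤ τ) :
    w i / orderWeight w T τ ≤ 1 :=
  div_le_one_of_le₀ (single_le_sum (fun j _ => (hw j).le) (mem_filter.mpr ⟨mem_univ i, hi⟩))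
    (orderWeight_pos w hw hi).le

lemma orderWeight_update_of_le {τ : ℝ} (ht : t ≤ τ) (hi : T i ≤ τ) :
    orderWeight w (Function.update T i t) τ = orderWeight w T τ := by
  unfold orderWeight
  congr 1
  ext j
  rcases eq_or_ne j i with rfl | hj
  · simp [ht, hi]
  · simp [Function.update_of_ne hj]

lemma shareTerm_update_of_le (ht : t < T i) {τ : ℝ} (hi : T i ≤ τ) :
    shareTerm K0 w (Function.update T i t) i τ = shareTerm K0 w T i τ := by
  have hlevels :
      (levels (Function.update T i t)).filter (τ < ·) = (levels T).filter (τ < ·) := by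
    rw [levels_update, levels_eq_insert T i, filter_insert, filter_insert,
      if_neg (ht.trans_le hi).not_gt, if_neg hi.not_gt]
  unfold shareTerm
  rw [invSucc_congr hlevels, orderWeight_update_of_le w (ht.le.trans hi) hi]

lemma share_eq_ownLevelTerm_add (T : Fin n → ℝ) (i : Fin n) :
    share K0 w T i = ownLevelTerm K0 w T i +
      ∑ u ∈ (otherLevels T i).filter (T i ≤ ·), shareTerm K0 w T i u := by
  rw [share_eq_sum_shareTerm, levels_eq_insert T i, filter_insert, if_pos le_rfl, ownLevelTerm]
  split_ifs with h
  · rw [insert_eq_of_mem (mem_filter.mpr ⟨h, le_rfl⟩), zero_add]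
  · rw [sum_insert fun h' => h (mem_filter.mp h').1]

lemma share_update_eq (ht : t < T i) :
    share K0 w (Function.update T i t) i =
      ∑ u ∈ (levels (Function.update T i t)).filter (fun u => t ≤ u ∧ u < T i),
        shareTerm K0 w (Function.update T i t) i u +
      ∑ u ∈ (otherLevels T i).filter (T i ≤ ·), shareTerm K0 w T i u := by
  have hhigh : ((levels (Function.update T i t)).filter (t ≤ ·)).filter (¬ · < T i) =
      (otherLevels T i).filter (T i ≤ ·) := by
    ext u
    simp only [levels_update, mem_filter, mem_insert, not_lt]
    grind
  rw [share_eq_sum_shareTerm, Function.update_self, ← sum_filter_add_sum_filter_not _ (· < T i),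
    filter_filter, hhigh]
  congr 1
  exact sum_congr rfl fun u hu => shareTerm_update_of_le K0 w ht (mem_filter.mp hu).2

end Sharing

section Deviation

variable {n : ℕ} {K0 : ℝ} {w : Fin n → ℝ} {T : Fin n → ℝ} {i : Fin n} {t : ℝ}

lemma orderWeight_update_le (hw : ∀ j, 0 ≤ w j) {u : ℝ} (hu : u < T i) :
    orderWeight w (Function.update T i t) u ≤ orderWeight w T (T i) := by
  refine sum_le_sum_of_subset_of_nonneg (fun j hj => ?_) fun j _ _ => hw j
  simp only [mem_filter, mem_univ, true_and] at hj ⊢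
  rcases eq_or_ne j i with rfl | hji
  · exact le_rfl
  · rw [Function.update_of_ne hji] at hj
    exact hj.trans hu.le

/-- With `ρ` the weight ratio of `i` at its old level, the term lost there is at most
`ρ K0 / T i`, while each new level below `T i` carries ratio at least `ρ` and their gaps add up
to at least `1 / t - 1 / T i ≥ 1 / T i`. -/
lemma share_le_share_update (hK0 : 0 ≤ K0) (hw : ∀ j, 0 < w j) (hT : ∀ j, 0 < T j)
    (ht : 0 < t) (h2t : 2 * t ≤ T i) :
    share K0 w T i ≤ share K0 w (Function.update T i t) i := by
  have hlt : t < T i := by linarith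
  rw [share_eq_ownLevelTerm_add, share_update_eq K0 w hlt]
  gcongr ?_ + _
  set T' := Function.update T i t
  set ρ := w i / orderWeight w T (T i) * K0
  have hρ : 0 ≤ ρ := mul_nonneg (div_nonneg (hw i).le (orderWeight_pos w hw le_rfl).le) hK0
  have hown : ownLevelTerm K0 w T i ≤ ρ * (1 / T i) := by
    unfold ownLevelTerm
    split_ifs
    · exact mul_nonneg hρ (one_div_nonneg.mpr (hT i).le)
    · have := invSucc_nonneg (levels T) (hT i).le
      rw [shareTerm, mul_assoc, mul_comm]
      exact mul_le_mul_of_nonneg_left (by linarith) hρ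
  have hlevels : ∀ x ∈ levels T', 0 < x := by
    intro x hx
    rw [levels_update, mem_insert] at hx
    rcases hx with rfl | hx
    · exact ht
    · obtain ⟨j, -, rfl⟩ := mem_image.mp hx
      exact hT j
  have hgaps := one_div_sub_one_div_le_sum_gaps hlevels
    (levels_update T i t ▸ mem_insert_self t _) hlt
  have hhalf : 1 / T i ≤ 1 / t - 1 / T i := by
    rw [le_sub_iff_add_le, ← two_mul, mul_one_div, div_le_div_iff₀ (hT i) ht]
    linarith
  calc ownLevelTerm K0 w T i
      ≤ ρ * (1 / t - 1 / T i) := hown.trans (mul_le_mul_of_nonneg_left hhalf hρ)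
    _ ≤ ∑ u ∈ (levels T').filter (fun u => t ≤ u ∧ u < T i),
          (1 / u - invSucc (levels T') u) * ρ := by
        rw [← sum_mul, mul_comm]
        exact mul_le_mul_of_nonneg_right hgaps hρ
    _ ≤ _ := by
        refine sum_le_sum fun u hu => ?_
        obtain ⟨hu, htu, huT⟩ := mem_filter.mp hu
        rw [shareTerm, mul_assoc]
        refine mul_le_mul_of_nonneg_left ?_
          (sub_nonneg.mpr (invSucc_le_one_div_self _ (hlevels u hu)))
        refine mul_le_mul_of_nonneg_right ?_ hK0
        exact div_le_div_of_nonneg_left (hw i).le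
          (orderWeight_pos w hw ((Function.update_self i t T).trans_le htu))
          (orderWeight_update_le (fun j => (hw j).le) huT)

lemma share_add_le_share_update (hK0 : 0 ≤ K0) (hw : ∀ j, 0 < w j) (ht : 0 < t)
    (hlt : t < T i) (hmin : ∀ j, T i ≤ T j) :
    share K0 w T i + K0 * (1 / t - 1 / T i) ≤ share K0 w (Function.update T i t) i := by
  set β := invSucc (levels (Function.update T i t)) t
  have hothers : ∀ x ∈ otherLevels T i, T i ≤ x := by
    intro x hx
    obtain ⟨j, -, rfl⟩ := mem_image.mp hx
    exact hmin j
  have hβ : β ≤ 1 / T i := by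
    refine invSucc_le_one_div (ht.trans hlt) fun x hx htx => ?_
    rw [levels_update, mem_insert] at hx
    rcases hx with rfl | hx
    · exact absurd htx (lt_irrefl x)
    · exact hothers x hx
  have hlow : (levels (Function.update T i t)).filter (fun u => t ≤ u ∧ u < T i) = {t} := by
    ext u
    simp only [levels_update, mem_filter, mem_insert, mem_singleton]
    constructor
    · rintro ⟨rfl | hu, -, huT⟩
      · rfl
      · exact absurd (hothers u hu) huT.not_ge
    · rintro rfl
      exact ⟨Or.inl rfl, le_rfl, hlt⟩
  have hnew : shareTerm K0 w (Function.update T i t) i t = (1 / t - β) * K0 := by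
    have halone : univ.filter (fun j => Function.update T i t j ≤ t) = {i} := by
      ext j
      rcases eq_or_ne j i with rfl | hji
      · simp
      · simp [hji, hlt.trans_le (hmin j)]
    rw [shareTerm, orderWeight, halone, sum_singleton, div_self (hw i).ne', mul_one]
  have hown : ownLevelTerm K0 w T i ≤ (1 / T i - β) * K0 := by
    unfold ownLevelTerm
    split_ifs with hTi
    · exact mul_nonneg (sub_nonneg.mpr hβ) hK0
    · have hnext : invSucc (levels T) (T i) = β := by
        refine invSucc_congr ?_
        rw [levels_eq_insert T i, levels_update, filter_insert, filter_insert,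
          if_neg (lt_irrefl _), if_neg (lt_irrefl _)]
        refine filter_congr fun x hx => ⟨hlt.trans, fun _ => ?_⟩
        exact (hothers x hx).lt_of_ne fun h => hTi (h ▸ hx)
      rw [shareTerm, hnext, mul_assoc]
      exact mul_le_mul_of_nonneg_left
        (mul_le_of_le_one_left hK0 (div_orderWeight_le_one w hw le_rfl)) (sub_nonneg.mpr hβ)
  rw [share_eq_ownLevelTerm_add, share_update_eq K0 w hlt, hlow, sum_singleton, hnew]
  linarith

end Deviation

lemma mul_add_div_le_of_two_mul_le {h c s t : ℝ} (hh : 0 ≤ h) (hs : 0 < s) (hst : 2 * s ≤ t)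
    (ht : h * t ^ 2 ≤ 2 * c) : h * t + c / t ≤ h * s + c / s := by
  have ht0 : 0 < t := by linarith
  have hprod : h * (t * s) ≤ c := by
    nlinarith [mul_le_mul_of_nonneg_left hst (mul_nonneg hh ht0.le)]
  have hdiff : h * s + c / s - (h * t + c / t) = (t - s) * (c - h * (t * s)) / (t * s) := by
    field_simp
    ring
  have : 0 ≤ (t - s) * (c - h * (t * s)) / (t * s) :=
    div_nonneg (mul_nonneg (by linarith) (by linarith)) (by positivity)
  linarith

theorem statement3_general {n : ℕ} (B K0 : ℝ) (K H w T : Fin n → ℝ)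
    (hB : 0 < B) (hK0 : 0 < K0) (hK : ∀ i, 0 ≤ K i) (hH : ∀ i, 0 < H i)
    (hw : ∀ i, 0 < w i)
    (hge : ∀ j, Tc n B K0 K H j ≤ T j)
    (i : Fin n) (hi : T i = Tc n B K0 K H i) (z : ℤ) (hz : 0 < z) :
    indCost K0 K H w T i ≤
      indCost K0 K H w (Function.update T i ((2 : ℝ) ^ (-z) * Tc n B K0 K H i)) i := by
  have hs : 0 < sval n K0 K H := sval_pos hK0 hK hH i
  have hT : ∀ j, 0 < T j := fun j => (Tc_pos hB j).trans_le (hge j)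
  have hz' : (2 : ℝ) ^ (-z) ≤ 1 / 2 := by
    rw [one_div, ← zpow_neg_one]
    exact zpow_le_zpow_right₀ one_le_two (by omega)
  have ht' : 0 < 2 ^ (-z) * T i := mul_pos (zpow_pos two_pos _) (hT i)
  have h2t : 2 * (2 ^ (-z) * T i) ≤ T i := by nlinarith [hT i]
  simp only [indCost, Function.update_self]
  rw [← hi]
  rcases le_or_gt (K i) (sval n K0 K H * H i) with hU | hV
  · have hmin : ∀ j, T i ≤ T j := fun j => hi ▸ (Tc_le_Tc_of_le hB hs hH hU j).trans (hge j)
    have hshare := share_add_le_share_update hK0.le hw ht' (by linarith) hmin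
    have hcost := mul_add_div_le_of_two_mul_le (hH i).le ht' h2t
      (hi ▸ mul_sq_Tc_le_of_le hB hs hH hU)
    rw [mul_sub, mul_one_div, mul_one_div] at hshare
    rw [add_div, add_div] at hcost
    linarith
  · have hcost := mul_add_div_le_of_two_mul_le (hH i).le ht' h2t
      (hi ▸ mul_sq_Tc_le_of_lt hB hs.le hH hV)
    have hshare := share_le_share_update hK0.le hw hT ht' h2t
    linarith

theorem statement3 {n : ℕ} (B K0 : ℝ) (K H w T : Fin n → ℝ)
    (hB : 0 < B) (hK0 : 0 < K0) (hK : ∀ i, 0 ≤ K i) (hH : ∀ i, 0 < H i)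
    (hw : ∀ i, 0 < w i)
    (hpot : ∀ j, IsPOT B (T j)) (hge : ∀ j, Tc n B K0 K H j ≤ T j)
    (i : Fin n) (hi : T i = Tc n B K0 K H i) (z : ℤ) (hz : 0 < z) :
    indCost K0 K H w T i ≤
      indCost K0 K H w (Function.update T i ((2 : ℝ) ^ (-z) * Tc n B K0 K H i)) i :=
  statement3_general B K0 K H w T hB hK0 hK hH hw hge i hi z hz
end

section
/- (WPS* has price of stability 1.) Define weights w*_i = (s·H_i − K_i)/K_0 for i ∈ U and w*_i = 0 for i ∈ V; these weights are nonnegative and Σ_{i∈U} w*_i = 1. Under the weighted proportional sharing rule with weights w* (using the convention that when an order group has total weight zero, K_0 is split equally among its members), the optimal centralized policy T^c is a Nash equilibrium. -/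
open Finset

lemma helper_div (a u v : ℝ) (hu : 0 < u) (hv : 0 < v) (huv : u ≤ v) (ha : a ≤ u*v) :
    u + a/u ≤ v + a/v := by
  have h : v + a/v - (u + a/u) = (v - u) * (u*v - a) / (u*v) := by
    field_simp; ring
  have h2 : 0 ≤ (v - u) * (u*v - a) / (u*v) :=
    div_nonneg (mul_nonneg (by linarith) (by linarith)) (by positivity)
  linarith

lemma helper_div2 (a u v : ℝ) (hu : 0 < u) (hv : 0 < v) (huv : u ≤ v) (ha : u*v ≤ a) :
    v + a/v ≤ u + a/u := by
  have h : (u + a/u) - (v + a/v) = (v - u) * (a - u*v) / (u*v) := by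
    field_simp; ring
  have h2 : 0 ≤ (v - u) * (a - u*v) / (u*v) :=
    div_nonneg (mul_nonneg (by linarith) (by linarith)) (by positivity)
  linarith

lemma isPOT_pos {B t : ℝ} (hB : 0 < B) (h : IsPOT B t) : 0 < t := by
  obtain ⟨z, rfl⟩ := h
  positivity

lemma pot_gap {B t t' : ℝ} (hB : 0 < B) (h : IsPOT B t) (h' : IsPOT B t') (hlt : t < t') :
    2 * t ≤ t' := by
  obtain ⟨z, rfl⟩ := h; obtain ⟨z', rfl⟩ := h'
  have hz : z < z' := by
    by_contra hc
    push_neg at hc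
    have : (2:ℝ)^z' ≤ (2:ℝ)^z := zpow_le_zpow_right₀ (by norm_num) hc
    nlinarith
  have h1 : (2:ℝ)^(z+1) ≤ (2:ℝ)^z' := zpow_le_zpow_right₀ (by norm_num) (by omega)
  have h2 : (2:ℝ)^(z+1) = 2 * (2:ℝ)^z := by
    rw [zpow_add_one₀ (by norm_num)]; ring
  nlinarith

lemma potRound_spec {B b : ℝ} (hB : 0 < B) (hb : 0 < b) :
    IsPOT B (potRound B b) ∧ b^2/2 ≤ (potRound B b)^2 ∧ (potRound B b)^2 ≤ 2*b^2 ∧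
      0 < potRound B b := by
  set L := Real.logb 2 (b / B) with hL
  set z := round L with hz
  have hround : |L - z| ≤ 1/2 := abs_sub_round L
  have hbB : (2:ℝ) ^ L = b / B := Real.rpow_logb (by positivity) (by norm_num) (by positivity)
  have hpot : potRound B b = (2:ℝ) ^ (z : ℝ) * B := by
    rw [potRound, Real.rpow_intCast]
  have hb2 : b = (2:ℝ) ^ L * B := by
    rw [hbB]; field_simp
  have habs := abs_le.1 hround
  have hup : (2:ℝ) ^ (z:ℝ) ≤ (2:ℝ) ^ (L + 1/2) :=
    Real.rpow_le_rpow_left_iff (by norm_num : (1:ℝ) < 2) |>.2 (by linarith)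
  have hdn : (2:ℝ) ^ (L - 1/2) ≤ (2:ℝ) ^ (z:ℝ) :=
    Real.rpow_le_rpow_left_iff (by norm_num : (1:ℝ) < 2) |>.2 (by linarith)
  have hsqrt : ((2:ℝ) ^ ((1:ℝ)/2))^2 = 2 := by
    rw [← Real.rpow_natCast ((2:ℝ) ^ ((1:ℝ)/2)) 2, ← Real.rpow_mul (by norm_num)]
    norm_num
  have hzpos : (0:ℝ) < (2:ℝ) ^ (z:ℝ) := Real.rpow_pos_of_pos (by norm_num) _
  have hLpos : (0:ℝ) < (2:ℝ) ^ L := Real.rpow_pos_of_pos (by norm_num) _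
  have hhpos : (0:ℝ) < (2:ℝ) ^ ((1:ℝ)/2) := Real.rpow_pos_of_pos (by norm_num) _
  have hupe : (2:ℝ) ^ (L + 1/2) = (2:ℝ) ^ L * (2:ℝ) ^ ((1:ℝ)/2) := by
    rw [← Real.rpow_add (by norm_num)]
  have hdne : (2:ℝ) ^ (L - 1/2) = (2:ℝ) ^ L / (2:ℝ) ^ ((1:ℝ)/2) := by
    rw [← Real.rpow_sub (by norm_num)]
  refine ⟨⟨z, by rw [potRound]⟩, ?_, ?_, by rw [hpot]; positivity⟩
  · -- b^2/2 ≤ a^2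
    rw [hpot, hb2]
    rw [hdne] at hdn
    have : (2:ℝ)^L * B ≤ (2:ℝ)^(z:ℝ) * B * (2:ℝ)^((1:ℝ)/2) := by
      rw [div_le_iff₀ hhpos] at hdn
      nlinarith
    nlinarith [sq_nonneg ((2:ℝ)^L * B)]
  · rw [hpot, hb2]
    rw [hupe] at hup
    have : (2:ℝ)^(z:ℝ) * B ≤ (2:ℝ)^L * B * (2:ℝ)^((1:ℝ)/2) := by nlinarith
    nlinarith [sq_nonneg ((2:ℝ)^(z:ℝ) * B), mul_pos hzpos hB]



lemma invSucc_bounds {L : Finset ℝ} (hL : ∀ x ∈ L, 0 < x) {τ : ℝ} (hτ : 0 < τ) :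
    0 ≤ invSucc L τ ∧ invSucc L τ ≤ 1/τ := by
  unfold invSucc
  split
  next h =>
    have hm := Finset.min'_mem _ h
    have h1 : τ < (L.filter fun u => τ < u).min' h := (Finset.mem_filter.1 hm).2
    have h0 : 0 < (L.filter fun u => τ < u).min' h := lt_trans hτ h1
    constructor
    · positivity
    · exact one_div_le_one_div_of_le hτ h1.le
  next h =>
    exact ⟨le_refl 0, by positivity⟩

lemma tel_aux (L : Finset ℝ) (hL : ∀ x ∈ L, 0 < x) :
    ∀ k : ℕ, ∀ a ∈ L, (L.filter (fun τ => a ≤ τ)).card = k →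
      ∑ τ ∈ L.filter (fun τ => a ≤ τ), (1/τ - invSucc L τ) = 1/a := by
  intro k
  induction k using Nat.strong_induction_on with
  | _ k ih =>
    intro a ha hk
    by_cases hne : (L.filter fun u => a < u).Nonempty
    · set b := (L.filter fun u => a < u).min' hne with hb
      have hbm := Finset.mem_filter.1 (Finset.min'_mem _ hne)
      have hbL : b ∈ L := hbm.1
      have hab : a < b := hbm.2
      have hsplit : L.filter (fun τ => a ≤ τ) = insert a (L.filter (fun τ => b ≤ τ)) := by
        ext τ
        simp only [Finset.mem_insert, Finset.mem_filter]
        constructor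
        · rintro ⟨hτL, haτ⟩
          rcases eq_or_lt_of_le haτ with h | h
          · exact Or.inl h.symm
          · exact Or.inr ⟨hτL, Finset.min'_le _ _ (Finset.mem_filter.2 ⟨hτL, h⟩)⟩
        · rintro (heq | ⟨hτL, hbτ⟩)
          · rw [heq]; exact ⟨ha, le_rfl⟩
          · exact ⟨hτL, le_trans hab.le hbτ⟩
      have hanotin : a ∉ L.filter (fun τ => b ≤ τ) := by
        simp only [Finset.mem_filter, not_and]
        intro _
        exact not_le.2 hab
      have hcard : (L.filter (fun τ => b ≤ τ)).card < k := by
        rw [← hk, hsplit, Finset.card_insert_of_notMem hanotin]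
        omega
      rw [hsplit, Finset.sum_insert hanotin, ih _ hcard b hbL rfl]
      have hinv : invSucc L a = 1/b := by
        rw [invSucc, dif_pos hne]
      rw [hinv]; ring
    · have hsingle : L.filter (fun τ => a ≤ τ) = {a} := by
        ext τ
        simp only [Finset.mem_filter, Finset.mem_singleton]
        constructor
        · rintro ⟨hτL, haτ⟩
          rcases eq_or_lt_of_le haτ with h | h
          · exact h.symm
          · exact absurd ⟨hτL, h⟩ (fun hmem => hne ⟨τ, Finset.mem_filter.2 hmem⟩)
        · rintro rfl; exact ⟨ha, le_refl _⟩
      rw [hsingle, Finset.sum_singleton, invSucc, dif_neg hne]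
      ring

lemma tel (L : Finset ℝ) (hL : ∀ x ∈ L, 0 < x) (a : ℝ) (ha : a ∈ L) :
    ∑ τ ∈ L.filter (fun τ => a ≤ τ), (1/τ - invSucc L τ) = 1/a :=
  tel_aux L hL _ a ha rfl



lemma shareZ_nonneg {n : ℕ} (K0 : ℝ) (hK0 : 0 ≤ K0) (w T : Fin n → ℝ)
    (hw : ∀ j, 0 ≤ w j) (hT : ∀ j, 0 < T j) (i : Fin n) : 0 ≤ shareZ K0 w T i := by
  have hLpos : ∀ x ∈ levels T, 0 < x := by
    intro x hx
    obtain ⟨j, _, rfl⟩ := Finset.mem_image.1 hx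
    exact hT j
  apply Finset.sum_nonneg
  intro τ hτ
  have hτL : τ ∈ levels T := (Finset.mem_filter.1 hτ).1
  have hτpos : 0 < τ := hLpos τ hτL
  obtain ⟨h1, h2⟩ := invSucc_bounds hLpos hτpos
  apply mul_nonneg (mul_nonneg (by linarith) _) hK0
  split
  next h => exact div_nonneg (hw i) h.le
  next => positivity

lemma shareZ_formula {n : ℕ} (K0 : ℝ) (w T : Fin n → ℝ) (U : Finset (Fin n))
    (i : Fin n) (t c : ℝ) (hc : 0 < c) (ht : 0 < t) (hK0 : 0 ≤ K0)
    (hTc : ∀ j, c ≤ T j) (hTU : ∀ j ∈ U, T j = c)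
    (hw0 : ∀ j, 0 ≤ w j) (hwU : ∑ j ∈ U, w j = 1) (hwV : ∀ j ∉ U, w j = 0)
    (hwi : w i ≤ 1) :
    (c ≤ t → shareZ K0 w (Function.update T i t) i = w i * K0 / t) ∧
    (t < c → w i * K0 / t + (1 - w i) * K0 * (1/t - 1/c) ≤
      shareZ K0 w (Function.update T i t) i) := by
  set T' := Function.update T i t with hT'
  have hT'i : T' i = t := Function.update_self i t T
  have hT'j : ∀ j, j ≠ i → T' j = T j := fun j hj => Function.update_of_ne hj t T
  have hT'pos : ∀ j, 0 < T' j := by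
    intro j
    by_cases hj : j = i
    · rw [hj, hT'i]; exact ht
    · rw [hT'j j hj]; exact lt_of_lt_of_le hc (hTc j)
  set L := levels T' with hLdef
  have hLpos : ∀ x ∈ L, 0 < x := by
    intro x hx
    obtain ⟨j, _, rfl⟩ := Finset.mem_image.1 hx
    exact hT'pos j
  have htL : t ∈ L := by
    rw [hLdef, ← hT'i]
    exact Finset.mem_image.2 ⟨i, Finset.mem_univ i, rfl⟩
  -- the branch value
  have hbranch : ∀ τ, t ≤ τ →
      (if 0 < ∑ j ∈ Finset.univ.filter (fun j => T' j ≤ τ), w j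
        then w i / ∑ j ∈ Finset.univ.filter (fun j => T' j ≤ τ), w j
        else 1 / ((Finset.univ.filter fun j => T' j ≤ τ) : Finset (Fin n)).card)
      = if τ < c then 1 else w i := by
    intro τ hτt
    by_cases hτc : τ < c
    · have hgrp : Finset.univ.filter (fun j => T' j ≤ τ) = {i} := by
        ext j
        simp only [Finset.mem_filter, Finset.mem_univ, true_and, Finset.mem_singleton]
        constructor
        · intro hj
          by_contra hji
          rw [hT'j j hji] at hj
          exact absurd hj (not_le.2 (lt_of_lt_of_le hτc (hTc j)))
        · rintro rfl
          rw [hT'i]; exact hτt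
      rw [hgrp, if_pos hτc]
      simp only [Finset.sum_singleton, Finset.card_singleton]
      rcases lt_or_eq_of_le (hw0 i) with h | h
      · rw [if_pos h, div_self h.ne']
      · rw [if_neg (by rw [← h]; exact lt_irrefl 0)]
        norm_num
    · push_neg at hτc
      have hUsub : U ⊆ Finset.univ.filter (fun j => T' j ≤ τ) := by
        intro j hj
        simp only [Finset.mem_filter, Finset.mem_univ, true_and]
        by_cases hji : j = i
        · rw [hji, hT'i]; exact hτt
        · rw [hT'j j hji, hTU j hj]; exact hτc
      have hsum : ∑ j ∈ Finset.univ.filter (fun j => T' j ≤ τ), w j = 1 := by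
        rw [← hwU]
        exact (Finset.sum_subset hUsub (fun x _ hx => hwV x hx)).symm
      rw [hsum, if_pos one_pos, if_neg (not_lt.2 hτc), div_one]
  have hF : (levels T').filter (fun τ => T' i ≤ τ) = L.filter (fun τ => t ≤ τ) := by
    rw [hT'i]
  have hexpand : shareZ K0 w T' i =
      ∑ τ ∈ L.filter (fun τ => t ≤ τ),
        (1/τ - invSucc L τ) * (if τ < c then 1 else w i) * K0 := by
    rw [shareZ, hF]
    apply Finset.sum_congr rfl
    intro τ hτ
    rw [hbranch τ (Finset.mem_filter.1 hτ).2]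
  have hsplit : shareZ K0 w T' i =
      w i * K0 * (∑ τ ∈ L.filter (fun τ => t ≤ τ), (1/τ - invSucc L τ)) +
      (1 - w i) * K0 *
        (∑ τ ∈ (L.filter (fun τ => t ≤ τ)).filter (fun τ => τ < c),
          (1/τ - invSucc L τ)) := by
    rw [hexpand]
    have step1 : ∑ τ ∈ L.filter (fun τ => t ≤ τ),
        (1/τ - invSucc L τ) * (if τ < c then 1 else w i) * K0 =
        ∑ τ ∈ L.filter (fun τ => t ≤ τ),
          (w i * K0 * (1/τ - invSucc L τ) +
            (if τ < c then (1 - w i) * K0 * (1/τ - invSucc L τ) else 0)) := by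
      apply Finset.sum_congr rfl
      intro τ hτ
      by_cases hτc : τ < c
      · rw [if_pos hτc, if_pos hτc]; ring
      · rw [if_neg hτc, if_neg hτc]; ring
    rw [step1, Finset.sum_add_distrib, ← Finset.mul_sum, ← Finset.sum_filter,
      ← Finset.mul_sum]
  have htel : ∑ τ ∈ L.filter (fun τ => t ≤ τ), (1/τ - invSucc L τ) = 1/t :=
    tel L hLpos t htL
  constructor
  · -- c ≤ t : second filter empty
    intro hct
    have hempty : (L.filter (fun τ => t ≤ τ)).filter (fun τ => τ < c) = ∅ := by
      apply Finset.filter_false_of_mem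
      intro τ hτ
      have := (Finset.mem_filter.1 hτ).2
      exact not_lt.2 (le_trans hct this)
    rw [hsplit, htel, hempty, Finset.sum_empty]
    ring
  · -- t < c
    intro htc
    have hEle : ∑ τ ∈ (L.filter (fun τ => t ≤ τ)).filter (fun τ => ¬ τ < c),
        (1/τ - invSucc L τ) ≤ 1/c := by
      have hset : (L.filter (fun τ => t ≤ τ)).filter (fun τ => ¬ τ < c) =
          L.filter (fun τ => c ≤ τ) := by
        ext τ
        simp only [Finset.mem_filter, not_lt, and_assoc]
        constructor
        · rintro ⟨h1, _, h3⟩; exact ⟨h1, h3⟩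
        · rintro ⟨h1, h2⟩; exact ⟨h1, le_trans htc.le h2, h2⟩
      rw [hset]
      by_cases hne : (L.filter (fun τ => c ≤ τ)).Nonempty
      · set m := (L.filter (fun τ => c ≤ τ)).min' hne with hm
        have hmm := Finset.mem_filter.1 (Finset.min'_mem _ hne)
        have hmL : m ∈ L := hmm.1
        have hcm : c ≤ m := hmm.2
        have hset2 : L.filter (fun τ => c ≤ τ) = L.filter (fun τ => m ≤ τ) := by
          ext τ
          simp only [Finset.mem_filter]
          constructor
          · rintro ⟨h1, h2⟩
            exact ⟨h1, Finset.min'_le _ _ (Finset.mem_filter.2 ⟨h1, h2⟩)⟩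
          · rintro ⟨h1, h2⟩; exact ⟨h1, le_trans hcm h2⟩
        rw [hset2, tel L hLpos m hmL]
        exact one_div_le_one_div_of_le hc hcm
      · rw [Finset.not_nonempty_iff_eq_empty.1 hne, Finset.sum_empty]
        positivity
    have hDE := Finset.sum_filter_add_sum_filter_not (L.filter (fun τ => t ≤ τ))
      (fun τ => τ < c) (fun τ => 1/τ - invSucc L τ)
    have hD : 1/t - 1/c ≤
        ∑ τ ∈ (L.filter (fun τ => t ≤ τ)).filter (fun τ => τ < c), (1/τ - invSucc L τ) := by
      linarith [hDE, hEle, htel]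
    have hcoef : 0 ≤ (1 - w i) * K0 := mul_nonneg (by linarith) hK0
    have h1 := mul_le_mul_of_nonneg_left hD hcoef
    rw [hsplit, htel]
    have e : w i * K0 / t = w i * K0 * (1/t) := by ring
    linarith [h1, e]
set_option maxHeartbeats 1000000 in
theorem statement9 {n : ℕ} (hn : 0 < n) (B K0 : ℝ) (K H : Fin n → ℝ)
    (hB : 0 < B) (hK0 : 0 < K0) (hK : ∀ i, 0 ≤ K i) (hH : ∀ i, 0 < H i)
    (wstar : Fin n → ℝ)
    (hws : ∀ i, wstar i =
      if K i ≤ sval n K0 K H * H i then (sval n K0 K H * H i - K i) / K0 else 0) :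
    (∀ i, 0 ≤ wstar i) ∧
    (∑ i ∈ Finset.univ.filter fun i => K i ≤ sval n K0 K H * H i, wstar i) = 1 ∧
    IsNEZ B K0 K H wstar (Tc n B K0 K H) := by
  classical
  haveI : Nonempty (Fin n) := ⟨⟨0, hn⟩⟩
  set s := sval n K0 K H with hs_def
  have himg_fin : ((fun S : Finset (Fin n) => (K0 + ∑ i ∈ S, K i) / ∑ i ∈ S, H i) ''
      {S | S.Nonempty}).Finite := Set.Finite.image _ (Set.toFinite _)
  have himg_ne : ((fun S : Finset (Fin n) => (K0 + ∑ i ∈ S, K i) / ∑ i ∈ S, H i) ''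
      {S | S.Nonempty}).Nonempty := ⟨_, ⟨Finset.univ, Finset.univ_nonempty, rfl⟩⟩
  have hs_mem : s ∈ ((fun S : Finset (Fin n) => (K0 + ∑ i ∈ S, K i) / ∑ i ∈ S, H i) ''
      {S | S.Nonempty}) := by
    rw [hs_def, sval]; exact himg_ne.csInf_mem himg_fin
  have hs_le : ∀ S : Finset (Fin n), S.Nonempty →
      s ≤ (K0 + ∑ i ∈ S, K i) / ∑ i ∈ S, H i := by
    intro S hS
    rw [hs_def, sval]
    exact csInf_le himg_fin.bddBelow ⟨S, hS, rfl⟩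
  obtain ⟨S0, hS0ne, hS0⟩ := hs_mem
  have hS0H : 0 < ∑ i ∈ S0, H i := Finset.sum_pos (fun i _ => hH i) hS0ne
  have hS0K : 0 ≤ ∑ i ∈ S0, K i := Finset.sum_nonneg fun i _ => hK i
  have hs_pos : 0 < s := by
    rw [← hS0]; exact div_pos (by linarith) hS0H
  have hg : ∀ S : Finset (Fin n), S.Nonempty → s * ∑ i ∈ S, H i ≤ K0 + ∑ i ∈ S, K i := by
    intro S hS
    have hSH : 0 < ∑ i ∈ S, H i := Finset.sum_pos (fun i _ => hH i) hS
    exact (le_div_iff₀ hSH).1 (hs_le S hS)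
  have hsi : ∀ i, s * H i ≤ K0 + K i := by
    intro i
    have := hg {i} ⟨i, Finset.mem_singleton_self i⟩
    simpa using this
  have hS0eq : K0 + ∑ i ∈ S0, K i = s * ∑ i ∈ S0, H i := (div_eq_iff hS0H.ne').1 hS0
  set U := Finset.univ.filter (fun i => K i ≤ s * H i) with hU
  have hsum_le : ∑ i ∈ U, (K i - s * H i) ≤ ∑ i ∈ S0, (K i - s * H i) := by
    have h2 : ∑ i ∈ U \ S0, (K i - s*H i) ≤ 0 := by
      apply Finset.sum_nonpos
      intro i hi
      have hiU := (Finset.mem_sdiff.1 hi).1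
      have := (Finset.mem_filter.1 hiU).2
      linarith
    have h3 := Finset.sum_inter_add_sum_sdiff U S0 (fun i => K i - s*H i)
    have h4 : ∑ i ∈ U ∩ S0, (K i - s*H i) ≤ ∑ i ∈ S0, (K i - s*H i) := by
      apply Finset.sum_le_sum_of_subset_of_nonneg Finset.inter_subset_right
      intro i hiS0 hiUS0
      have hiU : i ∉ U := fun h => hiUS0 (Finset.mem_inter.2 ⟨h, hiS0⟩)
      have hnot : ¬ K i ≤ s * H i := fun hc => hiU (Finset.mem_filter.2 ⟨Finset.mem_univ i, hc⟩)
      linarith [not_le.1 hnot]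
    linarith
  have hS0sum : ∑ i ∈ S0, (K i - s*H i) = -K0 := by
    rw [Finset.sum_sub_distrib, ← Finset.mul_sum]
    linarith
  have hUne : U.Nonempty := by
    rcases Finset.eq_empty_or_nonempty U with h | h
    · exfalso
      rw [h, Finset.sum_empty, hS0sum] at hsum_le
      linarith
    · exact h
  have hUeq : s * ∑ i ∈ U, H i = K0 + ∑ i ∈ U, K i := by
    have h1 := hg U hUne
    have h2 : ∑ i ∈ U, (K i - s*H i) ≤ -K0 := hS0sum ▸ hsum_le
    rw [Finset.sum_sub_distrib, ← Finset.mul_sum] at h2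
    linarith
  have hw_nonneg : ∀ i, 0 ≤ wstar i := by
    intro i
    rw [hws i]
    split
    next h => exact div_nonneg (by linarith) hK0.le
    next => exact le_rfl
  have hw_sum : ∑ i ∈ U, wstar i = 1 := by
    have hcg : ∀ i ∈ U, wstar i = (s * H i - K i)/K0 := by
      intro i hi
      rw [hws i, if_pos (Finset.mem_filter.1 hi).2]
    rw [Finset.sum_congr rfl hcg, ← Finset.sum_div, Finset.sum_sub_distrib, ← Finset.mul_sum,
      div_eq_one_iff_eq hK0.ne']
    linarith
  -- POT facts
  obtain ⟨hTUpot, hTUlb, hTUub, hTUpos⟩ := potRound_spec hB (Real.sqrt_pos.2 hs_pos)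
  set TU := potRound B (Real.sqrt s) with hTUdef
  rw [Real.sq_sqrt hs_pos.le] at hTUlb hTUub
  set T := Tc n B K0 K H with hT
  have hTdef : ∀ j, T j = if K j ≤ s * H j then TU else potRound B (Real.sqrt (K j / H j)) := by
    intro j
    rw [hT]
    simp only [Tc, ← hs_def, hTUdef]
  clear_value s U TU T
  have hVspec : ∀ j, ¬ K j ≤ s*H j →
      IsPOT B (T j) ∧ (K j / H j)/2 ≤ (T j)^2 ∧ (T j)^2 ≤ 2*(K j / H j) ∧ 0 < T j := by
    intro j hj
    have hKj : s * H j < K j := not_le.1 hj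
    have hKjpos : 0 < K j := lt_trans (mul_pos hs_pos (hH j)) hKj
    have hratio : 0 < K j / H j := div_pos hKjpos (hH j)
    have hspec := potRound_spec hB (Real.sqrt_pos.2 hratio)
    rw [Real.sq_sqrt hratio.le] at hspec
    rw [hTdef j, if_neg hj]
    exact ⟨hspec.1, by linarith [hspec.2.1], hspec.2.2.1, hspec.2.2.2⟩
  have hTpot : ∀ j, IsPOT B (T j) := by
    intro j
    by_cases hj : K j ≤ s*H j
    · rw [hTdef j, if_pos hj]; exact hTUpot
    · exact (hVspec j hj).1
  have hTpos : ∀ j, 0 < T j := fun j => isPOT_pos hB (hTpot j)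
  have hTge : ∀ j, TU ≤ T j := by
    intro j
    by_cases hj : K j ≤ s*H j
    · rw [hTdef j, if_pos hj]
    · by_contra hlt
      push_neg at hlt
      have h2 := pot_gap hB (hTpot j) hTUpot hlt
      obtain ⟨_, hlb, _, hpos⟩ := hVspec j hj
      have hKj : s * H j < K j := not_le.1 hj
      have hs_lt : s < K j / H j := (lt_div_iff₀ (hH j)).2 (by linarith)
      have h4 : 4 * (T j)^2 ≤ TU^2 := by nlinarith
      nlinarith
  have hstrat : ∀ i, InStrategy B K0 (K i) (H i) (T i) := by
    intro i
    refine ⟨hTpot i, ?_, ?_⟩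
    · have hsq2 : K i / (2 * H i) ≤ (T i)^2 := by
        by_cases hi : K i ≤ s*H i
        · rw [hTdef i, if_pos hi]
          have hh : K i / (2 * H i) ≤ s / 2 := by
            rw [div_le_div_iff₀ (by linarith [hH i]) (by norm_num)]
            nlinarith [hH i]
          linarith
        · obtain ⟨_, hlb, _, _⟩ := hVspec i hi
          have he : (K i / H i)/2 = K i/(2*H i) := by
            rw [div_div, mul_comm]
          linarith
      calc Real.sqrt (K i / (2*H i)) ≤ Real.sqrt ((T i)^2) := Real.sqrt_le_sqrt hsq2
        _ = T i := Real.sqrt_sq (hTpos i).le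
    · have hsq2 : (T i)^2 ≤ 2*(K0 + K i)/H i := by
        by_cases hi : K i ≤ s*H i
        · rw [hTdef i, if_pos hi]
          have hh : s ≤ (K0 + K i)/H i := (le_div_iff₀ (hH i)).2 (hsi i)
          rw [mul_div_assoc]
          linarith
        · obtain ⟨_, _, hub, _⟩ := hVspec i hi
          have h1 : K i/H i ≤ (K0+K i)/H i := by
            rw [div_le_div_iff₀ (hH i) (hH i)]
            nlinarith [hH i, hK0]
          rw [mul_div_assoc]
          linarith
      calc T i = Real.sqrt ((T i)^2) := (Real.sqrt_sq (hTpos i).le).symm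
        _ ≤ Real.sqrt (2*(K0+K i)/H i) := Real.sqrt_le_sqrt hsq2
  have hwV : ∀ j, j ∉ U → wstar j = 0 := by
    intro j hj
    rw [hws j, if_neg]
    intro hc
    exact hj (by rw [hU]; exact Finset.mem_filter.2 ⟨Finset.mem_univ j, hc⟩)
  have hwle1 : ∀ i, wstar i ≤ 1 := by
    intro i
    rw [hws i]
    split
    next h =>
      rw [div_le_one hK0]
      linarith [hsi i]
    next => norm_num
  have hTUj : ∀ j ∈ U, T j = TU := by
    intro j hj
    rw [hU] at hj
    rw [hTdef j, if_pos (Finset.mem_filter.1 hj).2]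
  have hform : ∀ (i : Fin n) (t : ℝ), 0 < t →
      (TU ≤ t → shareZ K0 wstar (Function.update T i t) i = wstar i * K0 / t) ∧
      (t < TU → wstar i * K0 / t + (1 - wstar i) * K0 * (1/t - 1/TU) ≤
        shareZ K0 wstar (Function.update T i t) i) :=
    fun i t ht => shareZ_formula K0 wstar T U i t TU hTUpos ht hK0.le hTge hTUj
      hw_nonneg hw_sum hwV (hwle1 i)
  have hEqshare : ∀ i, shareZ K0 wstar T i = wstar i * K0 / T i := by
    intro i
    have h := (hform i (T i) (hTpos i)).1 (hTge i)
    rwa [Function.update_eq_self] at h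
  refine ⟨hw_nonneg, hw_sum, hstrat, ?_⟩
  intro i t ht
  obtain ⟨htpot, ht1, ht2⟩ := ht
  have htpos : 0 < t := isPOT_pos hB htpot
  simp only [indCostZ, Function.update_self]
  rw [hEqshare i]
  by_cases hiU : K i ≤ s * H i
  · have hTi : T i = TU := by rw [hTdef i, if_pos hiU]
    have hwK : wstar i * K0 = s * H i - K i := by
      rw [hws i, if_pos hiU, div_mul_cancel₀ _ hK0.ne']
    rw [hTi]
    by_cases hct : TU ≤ t
    · rw [(hform i t htpos).1 hct]
      rcases eq_or_lt_of_le hct with heq | hlt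
      · rw [← heq]
      · have hgap : 2 * TU ≤ t := pot_gap hB hTUpot htpot hlt
        have hstu : s ≤ TU * t := by nlinarith
        have h := helper_div s TU t hTUpos htpos (by linarith) hstu
        have h2 := mul_le_mul_of_nonneg_left h (hH i).le
        have eL : H i * (TU + s/TU) = H i * TU + K i/TU + (s*H i - K i)/TU := by
          field_simp [hTUpos.ne'] <;> ring
        have eR : H i * (t + s/t) = H i * t + K i/t + (s*H i - K i)/t := by
          field_simp [htpos.ne'] <;> ring
        have g1 : wstar i * K0 / TU = (s*H i - K i)/TU := by rw [hwK]
        have g2 : wstar i * K0 / t = (s*H i - K i)/t := by rw [hwK]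
        linarith [h2, eL, eR, g1, g2]
    · push_neg at hct
      have hgap : 2 * t ≤ TU := pot_gap hB htpot hTUpot hct
      have hshare := (hform i t htpos).2 hct
      have hsle : s ≤ (K0 + K i)/H i := (le_div_iff₀ (hH i)).2 (hsi i)
      have hstu : t * TU ≤ (K0 + K i)/H i := by nlinarith
      have h := helper_div2 ((K0+K i)/H i) t TU htpos hTUpos (by linarith) hstu
      have h2 := mul_le_mul_of_nonneg_left h (hH i).le
      have eL : H i * (TU + ((K0+K i)/H i)/TU) = H i * TU + (K0 + K i)/TU := by
        field_simp [(hH i).ne', hTUpos.ne'] <;> ring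
      have eR : H i * (t + ((K0+K i)/H i)/t) = H i * t + (K0 + K i)/t := by
        field_simp [(hH i).ne', htpos.ne'] <;> ring
      have g1 : wstar i * K0 / TU = (s*H i - K i)/TU := by rw [hwK]
      have g2 : wstar i * K0 / t = (s*H i - K i)/t := by rw [hwK]
      have e0 : (1 - wstar i) * K0 * (1/t - 1/TU) =
          K0/t - K0/TU - wstar i*K0/t + wstar i*K0/TU := by ring
      have e2 : (K0 + K i)/TU = K0/TU + K i/TU := by ring
      have e3 : (K0 + K i)/t = K0/t + K i/t := by ring
      linarith [hshare, h2, eL, eR, g1, g2, e0, e2, e3]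
  · obtain ⟨hTipot, hTilb, hTiub, hTipos⟩ := hVspec i hiU
    have hw0 : wstar i = 0 := by
      apply hwV
      intro hmem
      rw [hU] at hmem
      exact hiU (Finset.mem_filter.1 hmem).2
    have hSnn : 0 ≤ shareZ K0 wstar (Function.update T i t) i := by
      apply shareZ_nonneg _ hK0.le _ _ hw_nonneg _ i
      intro j
      by_cases hj : j = i
      · rw [hj, Function.update_self]; exact htpos
      · rw [Function.update_of_ne hj]; exact hTpos j
    have hKs : s * H i < K i := not_le.1 hiU
    have hstand : H i * T i + K i / T i ≤ H i * t + K i / t := by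
      rcases lt_trichotomy t (T i) with hlt | heq | hgt
      · have hgap := pot_gap hB htpot hTipot hlt
        have hor : t * T i ≤ K i / H i := by nlinarith
        have h := helper_div2 (K i / H i) t (T i) htpos hTipos (by linarith) hor
        have h2 := mul_le_mul_of_nonneg_left h (hH i).le
        have eL : H i * (T i + (K i/H i)/(T i)) = H i * T i + K i/(T i) := by
          field_simp [(hH i).ne', hTipos.ne'] <;> ring
        have eR : H i * (t + (K i/H i)/t) = H i * t + K i/t := by
          field_simp [(hH i).ne', htpos.ne'] <;> ring
        linarith
      · rw [heq]
      · have hgap := pot_gap hB hTipot htpot hgt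
        have hs_lt : s < K i / H i := (lt_div_iff₀ (hH i)).2 (by linarith)
        have hor : K i / H i ≤ T i * t := by nlinarith
        have h := helper_div (K i/H i) (T i) t hTipos htpos (by linarith) hor
        have h2 := mul_le_mul_of_nonneg_left h (hH i).le
        have eL : H i * (T i + (K i/H i)/(T i)) = H i * T i + K i/(T i) := by
          field_simp [(hH i).ne', hTipos.ne'] <;> ring
        have eR : H i * (t + (K i/H i)/t) = H i * t + K i/t := by
          field_simp [(hH i).ne', htpos.ne'] <;> ring
        linarith
    rw [hw0]
    simp only [zero_mul, zero_div]
    linarith [hSnn, hstand]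
end
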